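/- Let M ≥ 1, let p : (ZMod (2M) → ℝ) → Fin 2 → ℝ be shift-permutation equivariant, and let x : ZMod (2M) → ℝ satisfy p x 0 ≠ p x 1 (so the maximizing index k*(x) is unique). Define LPD(x) = Poly(x)_{k*(x)}. Then LPD is shift-equivariant in the downsampling sense: if k*(x) = 1 then LPD(T_{2M} x) = LPD(x), and if k*(x) = 0 then LPD(T_{2M} x) = T_M (LPD(x)). In particular there exists S ∈ {T_M, id} with LPD(T_{2M} x) = S(LPD(x)). -/
import Mathlib


/-- Circular shift of a signal of length `N`: `(T_N x)[n] = x[n+1]`. -/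
def Tshift (N : ℕ) (x : ZMod N → ℝ) : ZMod N → ℝ := fun n => x (n + 1)

/-- Polyphase component `k ∈ {0,1}` of a signal of length `2M`:
`Poly(x)_k[n] = x[(2 n̄ + k) mod 2M]`. -/
def poly (M : ℕ) (x : ZMod (2 * M) → ℝ) (k : Fin 2) : ZMod M → ℝ :=
  fun n => x ((2 * n.val + k.val : ℕ) : ZMod (2 * M))

/-- `p` is shift-permutation equivariant: `p (T_{2M} x) (1 - k) = p x k`. -/
def ShiftPermEquivariant (M : ℕ) (p : (ZMod (2 * M) → ℝ) → Fin 2 → ℝ) : Prop :=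
  ∀ (x : ZMod (2 * M) → ℝ) (k : Fin 2), p (Tshift (2 * M) x) (1 - k) = p x k

/-- The index maximizing `k ↦ p x k` (unique whenever `p x 0 ≠ p x 1`). -/
noncomputable def kstar (M : ℕ) (p : (ZMod (2 * M) → ℝ) → Fin 2 → ℝ) (x : ZMod (2 * M) → ℝ) : Fin 2 :=
  if p x 1 < p x 0 then 0 else 1

/-- Learnable polyphase downsampling: `LPD(x) = Poly(x)_{k*(x)}`. -/
noncomputable def LPD (M : ℕ) (p : (ZMod (2 * M) → ℝ) → Fin 2 → ℝ) (x : ZMod (2 * M) → ℝ) :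
    ZMod M → ℝ :=
  poly M x (kstar M p x)

lemma poly_shift_zero (M : ℕ) (x : ZMod (2 * M) → ℝ) :
    poly M (Tshift (2 * M) x) 0 = poly M x 1 := by
  funext n
  simp only [poly, Tshift, Fin.val_zero, Fin.val_one, Nat.add_zero]
  push_cast
  ring_nf

lemma poly_shift_one (M : ℕ) [NeZero M] (x : ZMod (2 * M) → ℝ) :
    poly M (Tshift (2 * M) x) 1 = Tshift M (poly M x 0) := by
  funext n
  simp only [poly, Tshift, Fin.val_zero, Fin.val_one, Nat.add_zero]
  congr 1
  have h1 : ((n + 1).val : ℕ) ≡ n.val + 1 [MOD M] := by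
    have := ZMod.val_add n 1
    rw [this]
    calc (n.val + (1 : ZMod M).val) % M ≡ n.val + (1 : ZMod M).val [MOD M] :=
          Nat.mod_modEq _ _
      _ ≡ n.val + 1 [MOD M] := by
          have : ((1 : ZMod M).val : ZMod M) = ((1 : ℕ) : ZMod M) := by
            simp [ZMod.natCast_val]
          exact Nat.ModEq.add_left _ ((ZMod.natCast_eq_natCast_iff _ _ _).mp this)
  have h2 : 2 * (n + 1).val ≡ 2 * (n.val + 1) [MOD 2 * M] := h1.mul_left' 2
  have := (ZMod.natCast_eq_natCast_iff _ _ _).mpr h2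
  rw [this]
  push_cast
  ring

lemma kstar_shift (M : ℕ) (p : (ZMod (2 * M) → ℝ) → Fin 2 → ℝ)
    (hp : ShiftPermEquivariant M p) (x : ZMod (2 * M) → ℝ) (hx : p x 0 ≠ p x 1) :
    kstar M p (Tshift (2 * M) x) = 1 - kstar M p x := by
  have h0 : p (Tshift (2 * M) x) 1 = p x 0 := hp x 0
  have h1 : p (Tshift (2 * M) x) 0 = p x 1 := hp x 1
  unfold kstar
  rw [h0, h1]
  rcases lt_or_gt_of_ne hx with h | h
  · simp [h, not_lt.mpr h.le]
  · simp [h, not_lt.mpr h.le]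

/-- LPD is a shift-equivariant downsampling layer. -/
theorem lpd_shift_equivariant (M : ℕ) [NeZero M]
    (p : (ZMod (2 * M) → ℝ) → Fin 2 → ℝ) (hp : ShiftPermEquivariant M p)
    (x : ZMod (2 * M) → ℝ) (hx : p x 0 ≠ p x 1) :
    (kstar M p x = 1 → LPD M p (Tshift (2 * M) x) = LPD M p x) ∧
    (kstar M p x = 0 → LPD M p (Tshift (2 * M) x) = Tshift M (LPD M p x)) ∧
    ∃ S ∈ ({Tshift M, id} : Set ((ZMod M → ℝ) → (ZMod M → ℝ))),
      LPD M p (Tshift (2 * M) x) = S (LPD M p x) := by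
  have hk := kstar_shift M p hp x hx
  have case1 : kstar M p x = 1 → LPD M p (Tshift (2 * M) x) = LPD M p x := by
    intro h
    unfold LPD
    rw [hk, h]
    norm_num
    rw [poly_shift_zero]
  have case0 : kstar M p x = 0 → LPD M p (Tshift (2 * M) x) = Tshift M (LPD M p x) := by
    intro h
    unfold LPD
    rw [hk, h]
    norm_num
    rw [poly_shift_one]
  refine ⟨case1, case0, ?_⟩
  rcases Fin.exists_fin_two.mp ⟨kstar M p x, rfl⟩ with h | h
  · exact ⟨Tshift M, Or.inl rfl, case0 h⟩
  · exact ⟨id, Or.inr rfl, case1 h⟩
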